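/- arXiv:2305.10620 — 9 statements merged into one kernel-verified Lean document; each statement's English description precedes it below -/
import Mathlib

section
/- With the definitions and assumptions in the context, if x_0 ∈ S_*, then for all t ≥ T, φ(x_0, t) ∈ S_b. -/
open Set

/-- Under the semiflow `φ` on `ℝ^n` with safe set `S_s = {h_s ≥ 0}`, backup safe
set `S_b = {h_b ≥ 0}` with `S_b ⊆ S_s` forward invariant under `φ`, and
`S_* = {x : h_*(x) ≥ 0}` where `h_*(x) = min{h_b(φ(x,T)), inf_{τ∈[0,T]} h_s(φ(x,τ))}`
(so `x ∈ S_*` iff `h_b(φ(x,T)) ≥ 0` and `h_s(φ(x,τ)) ≥ 0` for all `τ ∈ [0,T]`),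
if `x₀ ∈ S_*` then for all `t ≥ T`, `φ(x₀,t) ∈ S_b`. -/
theorem Sstar_reaches_Sb_after_T
    (n : ℕ) (hn : 0 < n)
    (φ : EuclideanSpace ℝ (Fin n) → ℝ → EuclideanSpace ℝ (Fin n))
    (hφ0 : ∀ x, φ x 0 = x)
    (hφadd : ∀ (x : EuclideanSpace ℝ (Fin n)) (s t : ℝ), 0 ≤ s → 0 ≤ t →
      φ x (s + t) = φ (φ x s) t)
    (hs hb : EuclideanSpace ℝ (Fin n) → ℝ)
    (Ss Sb Sstar : Set (EuclideanSpace ℝ (Fin n)))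
    (hSs : Ss = {x | 0 ≤ hs x})
    (hSb : Sb = {x | 0 ≤ hb x})
    (hsub : Sb ⊆ Ss)
    (hinv : ∀ x ∈ Sb, ∀ t : ℝ, 0 ≤ t → φ x t ∈ Sb)
    (T : ℝ) (hT : 0 < T)
    (hSstar : Sstar = {x | 0 ≤ hb (φ x T) ∧ ∀ τ ∈ Icc (0:ℝ) T, 0 ≤ hs (φ x τ)})
    (x₀ : EuclideanSpace ℝ (Fin n)) (hx₀ : x₀ ∈ Sstar) :
    ∀ t : ℝ, T ≤ t → φ x₀ t ∈ Sb := by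
  intro t ht
  rw [hSstar] at hx₀
  have hb0 : φ x₀ T ∈ Sb := by rw [hSb]; exact hx₀.1
  have : φ x₀ t = φ (φ x₀ T) (t - T) := by
    rw [← hφadd x₀ T (t - T) hT.le (by linarith)]
    ring_nf
  rw [this]
  exact hinv _ hb0 _ (by linarith)
end

section
/- With the definitions and assumptions in the context, if x_0 ∈ S_*, then for all t ≥ 0, φ(x_0, t) ∈ S_* (i.e., S_* is forward invariant under the backup flow φ). -/
open Set

/-- Under the semiflow `φ` on `ℝ^n` with safe set `S_s = {h_s ≥ 0}`, backup safe
set `S_b = {h_b ≥ 0}` with `S_b ⊆ S_s` forward invariant under `φ`, and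
`S_* = {x : h_*(x) ≥ 0}` where `h_*(x) = min{h_b(φ(x,T)), inf_{τ∈[0,T]} h_s(φ(x,τ))}`
(so `x ∈ S_*` iff `h_b(φ(x,T)) ≥ 0` and `h_s(φ(x,τ)) ≥ 0` for all `τ ∈ [0,T]`),
if `x₀ ∈ S_*` then for all `t ≥ 0`, `φ(x₀,t) ∈ S_*` (i.e. `S_*` is forward invariant under the backup flow). -/
theorem Sstar_forward_invariant
    (n : ℕ) (hn : 0 < n)
    (φ : EuclideanSpace ℝ (Fin n) → ℝ → EuclideanSpace ℝ (Fin n))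
    (hφ0 : ∀ x, φ x 0 = x)
    (hφadd : ∀ (x : EuclideanSpace ℝ (Fin n)) (s t : ℝ), 0 ≤ s → 0 ≤ t →
      φ x (s + t) = φ (φ x s) t)
    (hs hb : EuclideanSpace ℝ (Fin n) → ℝ)
    (Ss Sb Sstar : Set (EuclideanSpace ℝ (Fin n)))
    (hSs : Ss = {x | 0 ≤ hs x})
    (hSb : Sb = {x | 0 ≤ hb x})
    (hsub : Sb ⊆ Ss)
    (hinv : ∀ x ∈ Sb, ∀ t : ℝ, 0 ≤ t → φ x t ∈ Sb)
    (T : ℝ) (hT : 0 < T)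
    (hSstar : Sstar = {x | 0 ≤ hb (φ x T) ∧ ∀ τ ∈ Icc (0:ℝ) T, 0 ≤ hs (φ x τ)})
    (x₀ : EuclideanSpace ℝ (Fin n)) (hx₀ : x₀ ∈ Sstar) :
    ∀ t : ℝ, 0 ≤ t → φ x₀ t ∈ Sstar := by
  intro t ht
  subst hSstar hSb hSs
  obtain ⟨hxb, hxs⟩ := hx₀
  have hbT : φ x₀ T ∈ {x | 0 ≤ hb x} := hxb
  have key : ∀ u : ℝ, T ≤ u → 0 ≤ hb (φ x₀ u) := by
    intro u hu
    have h1 : φ x₀ u = φ (φ x₀ T) (u - T) := by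
      rw [← hφadd x₀ T (u - T) hT.le (by linarith)]
      ring_nf
    rw [h1]
    exact hinv _ hbT _ (by linarith)
  constructor
  · have h1 : φ (φ x₀ t) T = φ x₀ (t + T) := (hφadd x₀ t T ht hT.le).symm
    rw [h1]
    exact key (t + T) (by linarith)
  · intro τ hτ
    have h1 : φ (φ x₀ t) τ = φ x₀ (t + τ) := (hφadd x₀ t τ ht hτ.1).symm
    rw [h1]
    by_cases hc : t + τ ≤ T
    · exact hxs (t + τ) ⟨by linarith [hτ.1], hc⟩
    · exact hsub (key (t + τ) (by linarith))
end

section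
/- With the definitions and assumptions in the context, if x_0 ∈ S̄_*, then for every i ∈ {0, 1, …, N}, φ(x_0, i·T_s) ∈ S̄_* (i.e., the trajectory under the backup flow remains in S̄_* at all sample times). -/
open Set

/-!
Sampling the semiflow with step `τ ≥ 0` turns the semigroup law into addition of sample indices:
`φ(φ(x, iτ), jτ) = φ(x, (i + j)τ)`. So the samples of `φ(x₀, iτ)` are samples of `x₀` with
shifted index. Indices up to `N` are safe by assumption on `x₀`; indices beyond `N` lie on the
trajectory of `φ(x₀, Nτ) ∈ S_b`, which stays in the forward invariant set `S_b ⊆ S_s`.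
-/

variable {X : Type*}

/-- The set `S̄_*` of the paper, with `S = S_s`, `B = S_b` and `τ = T_s`. -/
def sampledViableSet (φ : X → ℝ → X) (S B : Set X) (τ : ℝ) (N : ℕ) : Set X :=
  {x | φ x (N * τ) ∈ B ∧ ∀ j ≤ N, φ x (j * τ) ∈ S}

section Semiflow

variable {φ : X → ℝ → X}
  (hφadd : ∀ x (s t : ℝ), 0 ≤ s → 0 ≤ t → φ x (s + t) = φ (φ x s) t)
  {τ : ℝ} (hτ : 0 ≤ τ)
include hφadd hτ

theorem semiflow_natCast_mul_comp (x : X) (i j : ℕ) :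
    φ (φ x (i * τ)) (j * τ) = φ x ((i + j : ℕ) * τ) := by
  rw [Nat.cast_add, add_mul, hφadd x _ _ (by positivity) (by positivity)]

theorem semiflow_natCast_mul_mem_of_le {B : Set X} (hB : ∀ x ∈ B, ∀ t : ℝ, 0 ≤ t → φ x t ∈ B)
    {x : X} {N k : ℕ} (hxN : φ x (N * τ) ∈ B) (hNk : N ≤ k) : φ x (k * τ) ∈ B := by
  obtain ⟨m, rfl⟩ := Nat.exists_eq_add_of_le hNk
  rw [← semiflow_natCast_mul_comp hφadd hτ]
  exact hB _ hxN _ (by positivity)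

theorem semiflow_natCast_mul_mem_sampledViableSet {S B : Set X} (hBS : B ⊆ S)
    (hB : ∀ x ∈ B, ∀ t : ℝ, 0 ≤ t → φ x t ∈ B) {N : ℕ} {x : X}
    (hx : x ∈ sampledViableSet φ S B τ N) (i : ℕ) :
    φ x (i * τ) ∈ sampledViableSet φ S B τ N := by
  obtain ⟨hxB, hxS⟩ := hx
  refine ⟨?_, fun j hj => ?_⟩
  · rw [semiflow_natCast_mul_comp hφadd hτ]
    exact semiflow_natCast_mul_mem_of_le hφadd hτ hB hxB (Nat.le_add_left N i)
  · rw [semiflow_natCast_mul_comp hφadd hτ]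
    rcases le_total (i + j) N with hle | hle
    · exact hxS _ hle
    · exact hBS (semiflow_natCast_mul_mem_of_le hφadd hτ hB hxB hle)

end Semiflow

theorem SbarStar_invariant_at_sample_times_general
    (n : ℕ)
    (φ : EuclideanSpace ℝ (Fin n) → ℝ → EuclideanSpace ℝ (Fin n))
    (hφadd : ∀ (x : EuclideanSpace ℝ (Fin n)) (s t : ℝ), 0 ≤ s → 0 ≤ t →
      φ x (s + t) = φ (φ x s) t)
    (hs hb : EuclideanSpace ℝ (Fin n) → ℝ)
    (Ss Sb : Set (EuclideanSpace ℝ (Fin n)))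
    (hSs : Ss = {x | 0 ≤ hs x})
    (hSb : Sb = {x | 0 ≤ hb x})
    (hsub : Sb ⊆ Ss)
    (hinv : ∀ x ∈ Sb, ∀ t : ℝ, 0 ≤ t → φ x t ∈ Sb)
    (T : ℝ) (hT : 0 < T)
    (N : ℕ) (Ts : ℝ) (hTs : Ts = T / N)
    (hbarStar : EuclideanSpace ℝ (Fin n) → ℝ)
    (hhbarStar : ∀ x, hbarStar x =
      min (hb (φ x ((N : ℝ) * Ts)))
        ((Finset.range (N + 1)).inf' Finset.nonempty_range_add_one
          (fun i => hs (φ x ((i : ℝ) * Ts)))))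
    (SbarStar : Set (EuclideanSpace ℝ (Fin n)))
    (hSbarStar : SbarStar = {x | 0 ≤ hbarStar x})
    (x₀ : EuclideanSpace ℝ (Fin n)) (hx₀ : x₀ ∈ SbarStar) :
    ∀ i : ℕ, i ≤ N → φ x₀ ((i : ℝ) * Ts) ∈ SbarStar := by
  have hTs_nonneg : 0 ≤ Ts := hTs ▸ by positivity
  have hSbarStar_eq : SbarStar = sampledViableSet φ Ss Sb Ts N := by
    ext x
    simp only [hSbarStar, hSs, hSb, sampledViableSet, mem_ofPred_eq, hhbarStar, le_min_iff,
      Finset.le_inf'_iff, Finset.mem_range, Nat.lt_succ_iff]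
  rw [hSbarStar_eq] at hx₀ ⊢
  exact fun i _ => semiflow_natCast_mul_mem_sampledViableSet hφadd hTs_nonneg hsub hinv hx₀ i

/-- STATEMENT 7: Under the semiflow `φ` on `ℝ^n` with safe set `S_s = {h_s ≥ 0}`, backup safe
set `S_b = {h_b ≥ 0}` with `S_b ⊆ S_s` forward invariant under `φ`, `T_s = T/N`,
`h̄_*(x) = min{h_b(φ(x,N·T_s)), min_{i∈{0,…,N}} h_s(φ(x,i·T_s))}`, and
`S̄_* = {x : h̄_*(x) ≥ 0}`, if `x₀ ∈ S̄_*` then for every `i ∈ {0,1,…,N}`, `φ(x₀, i·T_s) ∈ S̄_*` (the backup trajectory remains in `S̄_*` at all sample times). -/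
theorem SbarStar_invariant_at_sample_times
    (n : ℕ) (hn : 0 < n)
    (φ : EuclideanSpace ℝ (Fin n) → ℝ → EuclideanSpace ℝ (Fin n))
    (hφ0 : ∀ x, φ x 0 = x)
    (hφadd : ∀ (x : EuclideanSpace ℝ (Fin n)) (s t : ℝ), 0 ≤ s → 0 ≤ t →
      φ x (s + t) = φ (φ x s) t)
    (hs hb : EuclideanSpace ℝ (Fin n) → ℝ)
    (Ss Sb : Set (EuclideanSpace ℝ (Fin n)))
    (hSs : Ss = {x | 0 ≤ hs x})
    (hSb : Sb = {x | 0 ≤ hb x})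
    (hsub : Sb ⊆ Ss)
    (hinv : ∀ x ∈ Sb, ∀ t : ℝ, 0 ≤ t → φ x t ∈ Sb)
    (T : ℝ) (hT : 0 < T)
    (N : ℕ) (hN : 0 < N) (Ts : ℝ) (hTs : Ts = T / N)
    (hbarStar : EuclideanSpace ℝ (Fin n) → ℝ)
    (hhbarStar : ∀ x, hbarStar x =
      min (hb (φ x ((N : ℝ) * Ts)))
        ((Finset.range (N + 1)).inf' Finset.nonempty_range_add_one
          (fun i => hs (φ x ((i : ℝ) * Ts)))))
    (SbarStar : Set (EuclideanSpace ℝ (Fin n)))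
    (hSbarStar : SbarStar = {x | 0 ≤ hbarStar x})
    (x₀ : EuclideanSpace ℝ (Fin n)) (hx₀ : x₀ ∈ SbarStar) :
    ∀ i : ℕ, i ≤ N → φ x₀ ((i : ℝ) * Ts) ∈ SbarStar :=
  SbarStar_invariant_at_sample_times_general n φ hφadd hs hb Ss Sb hSs hSb hsub hinv T hT N Ts hTs
    hbarStar hhbarStar SbarStar hSbarStar x₀ hx₀
end

section
/- With the definitions and assumptions in the context, the inclusions underbar-S_* ⊆ S_* ⊆ S̄_* ⊆ S_s hold, where underbar-S_* = {x ∈ ℝ^n : h̄_*(x) ≥ (1/2)·T_s·l_φ·l_s}. -/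
open Set

/-!
Every `τ ∈ [0, N·T_s]` lies within `T_s / 2` of a grid point `i·T_s`, `i ≤ N`, and
`τ ↦ h_s(φ(x, τ))` is `l_s·l_φ`-Lipschitz on `[0, T]`. So a margin of `l_s·l_φ·T_s / 2` at every
grid point keeps `h_s ∘ φ(x, ·)` nonnegative on the whole interval. The other two inclusions only
evaluate the conditions at the grid points, `τ = 0` included.
-/

lemma natCast_mul_mem_Icc {h : ℝ} (hh : 0 ≤ h) {i N : ℕ} (hi : i ≤ N) :
    (i : ℝ) * h ∈ Icc 0 (N * h) :=
  ⟨by positivity, mul_le_mul_of_nonneg_right (by exact_mod_cast hi) hh⟩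

lemma exists_le_abs_sub_natCast_mul_le_half {h t : ℝ} {N : ℕ} (hh : 0 < h)
    (ht : t ∈ Icc 0 (N * h)) : ∃ i ≤ N, |t - i * h| ≤ h / 2 := by
  have hpos : 0 ≤ t / h + 1 / 2 := by have := ht.1; positivity
  have hN : t / h ≤ N := (div_le_iff₀ hh).2 ht.2
  refine ⟨⌊t / h + 1 / 2⌋₊, ?_, ?_⟩
  · rw [← Nat.lt_succ_iff, Nat.floor_lt hpos]
    push_cast
    linarith
  · have hle := Nat.floor_le hpos
    have hlt := Nat.lt_floor_add_one (t / h + 1 / 2)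
    have hclose : |t / h - ⌊t / h + 1 / 2⌋₊| ≤ 1 / 2 := abs_le.2 ⟨by linarith, by linarith⟩
    calc |t - ⌊t / h + 1 / 2⌋₊ * h| = h * |t / h - ⌊t / h + 1 / 2⌋₊| := by
          rw [← abs_of_pos hh, ← abs_mul, abs_of_pos hh, mul_sub, mul_div_cancel₀ _ hh.ne',
            mul_comm]
      _ ≤ h * (1 / 2) := by gcongr
      _ = h / 2 := by ring

lemma nonneg_on_Icc_of_grid_margin {g : ℝ → ℝ} {L h : ℝ} {N : ℕ} (hL : 0 ≤ L) (hh : 0 < h)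
    (hg : ∀ τ ∈ Icc 0 (N * h), ∀ σ ∈ Icc 0 (N * h), |g τ - g σ| ≤ L * |τ - σ|)
    (hgrid : ∀ i ≤ N, L * h / 2 ≤ g (i * h)) :
    ∀ τ ∈ Icc 0 (N * h), 0 ≤ g τ := by
  intro τ hτ
  obtain ⟨i, hiN, hclose⟩ := exists_le_abs_sub_natCast_mul_le_half hh hτ
  have hdiff := hg τ hτ _ (natCast_mul_mem_Icc hh.le hiN)
  calc (0 : ℝ) = L * h / 2 - L * (h / 2) := by ring
    _ ≤ g (i * h) - L * |τ - i * h| := by gcongr; exact hgrid i hiN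
    _ ≤ g τ := by linarith [(abs_le.1 hdiff).1]

theorem ubarSstar_subset_Sstar_subset_SbarStar_subset_Ss_general
    (n : ℕ)
    (φ : EuclideanSpace ℝ (Fin n) → ℝ → EuclideanSpace ℝ (Fin n))
    (hφ0 : ∀ x, φ x 0 = x)
    (hs hb : EuclideanSpace ℝ (Fin n) → ℝ)
    (Ss Sstar : Set (EuclideanSpace ℝ (Fin n)))
    (hSs : Ss = {x | 0 ≤ hs x})
    (T : ℝ) (hT : 0 < T)
    (hSstar : Sstar = {x | 0 ≤ hb (φ x T) ∧ ∀ τ ∈ Icc (0:ℝ) T, 0 ≤ hs (φ x τ)})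
    (N : ℕ) (hN : 0 < N) (Ts : ℝ) (hTs : Ts = T / N)
    (hbarStar : EuclideanSpace ℝ (Fin n) → ℝ)
    (hhbarStar : ∀ x, hbarStar x =
      min (hb (φ x ((N : ℝ) * Ts)))
        ((Finset.range (N + 1)).inf' Finset.nonempty_range_add_one
          (fun i => hs (φ x ((i : ℝ) * Ts)))))
    (SbarStar : Set (EuclideanSpace ℝ (Fin n)))
    (hSbarStar : SbarStar = {x | 0 ≤ hbarStar x})
    (ls lφ : ℝ) (hls : 0 < ls) (hlφ : 0 < lφ)
    (hlip_s : ∀ x y : EuclideanSpace ℝ (Fin n), |hs x - hs y| ≤ ls * ‖x - y‖)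
    (hlip_φ : ∀ x : EuclideanSpace ℝ (Fin n), ∀ τ₁ ∈ Icc (0:ℝ) T, ∀ τ₂ ∈ Icc (0:ℝ) T,
      ‖φ x τ₁ - φ x τ₂‖ ≤ lφ * |τ₁ - τ₂|)
    (ubarSstar : Set (EuclideanSpace ℝ (Fin n)))
    (hubarSstar : ubarSstar = {x | (1 / 2) * Ts * lφ * ls ≤ hbarStar x}) :
    ubarSstar ⊆ Sstar ∧ Sstar ⊆ SbarStar ∧ SbarStar ⊆ Ss := by
  have hTs0 : 0 < Ts := by rw [hTs]; positivity
  have hNT : (N : ℝ) * Ts = T := by rw [hTs]; field_simp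
  subst hNT hSs hSstar hSbarStar hubarSstar
  have le_hbarStar_iff : ∀ x c, c ≤ hbarStar x ↔
      c ≤ hb (φ x (N * Ts)) ∧ ∀ i ≤ N, c ≤ hs (φ x (i * Ts)) := by
    intro x c
    simp [hhbarStar, Finset.le_inf'_iff]
  refine ⟨fun x hx => ?_, fun x hx => ?_, fun x hx => ?_⟩
  · obtain ⟨hb_ge, hs_ge⟩ := (le_hbarStar_iff x _).1 hx
    refine ⟨(show (0 : ℝ) ≤ 1 / 2 * Ts * lφ * ls by positivity).trans hb_ge,
      nonneg_on_Icc_of_grid_margin (L := ls * lφ) (by positivity) hTs0 (fun τ hτ σ hσ => ?_)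
        (fun i hi => by linarith [hs_ge i hi])⟩
    calc |hs (φ x τ) - hs (φ x σ)| ≤ ls * ‖φ x τ - φ x σ‖ := hlip_s _ _
      _ ≤ ls * (lφ * |τ - σ|) := by gcongr; exact hlip_φ x τ hτ σ hσ
      _ = ls * lφ * |τ - σ| := by ring
  · exact (le_hbarStar_iff x 0).2 ⟨hx.1, fun i hi => hx.2 _ (natCast_mul_mem_Icc hTs0.le hi)⟩
  · simpa [hφ0] using ((le_hbarStar_iff x 0).1 hx).2 0 N.zero_le

/-- Under the semiflow `φ` on `ℝ^n` with safe set `S_s = {h_s ≥ 0}`, backup safe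
set `S_b = {h_b ≥ 0}` with `S_b ⊆ S_s` forward invariant under `φ`,
`S_* = {x : h_*(x) ≥ 0}` where `h_*(x) = min{h_b(φ(x,T)), inf_{τ∈[0,T]} h_s(φ(x,τ))}`
(so `x ∈ S_*` iff `h_b(φ(x,T)) ≥ 0` and `h_s(φ(x,τ)) ≥ 0` for all `τ ∈ [0,T]`),
`T_s = T/N`, `h̄_*(x) = min{h_b(φ(x,N·T_s)), min_{i∈{0,…,N}} h_s(φ(x,i·T_s))}`,
`S̄_* = {x : h̄_*(x) ≥ 0}`, `h_s` Lipschitz with constant `l_s > 0` (Euclidean norm),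
`τ ↦ φ(x,τ)` Lipschitz on `[0,T]` with constant `l_φ > 0`, and
`underbar-S_* = {x : h̄_*(x) ≥ (1/2)·T_s·l_φ·l_s}`, we have
`underbar-S_* ⊆ S_* ⊆ S̄_* ⊆ S_s`. -/
theorem ubarSstar_subset_Sstar_subset_SbarStar_subset_Ss
    (n : ℕ) (hn : 0 < n)
    (φ : EuclideanSpace ℝ (Fin n) → ℝ → EuclideanSpace ℝ (Fin n))
    (hφ0 : ∀ x, φ x 0 = x)
    (hφadd : ∀ (x : EuclideanSpace ℝ (Fin n)) (s t : ℝ), 0 ≤ s → 0 ≤ t →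
      φ x (s + t) = φ (φ x s) t)
    (hs hb : EuclideanSpace ℝ (Fin n) → ℝ)
    (Ss Sb Sstar : Set (EuclideanSpace ℝ (Fin n)))
    (hSs : Ss = {x | 0 ≤ hs x})
    (hSb : Sb = {x | 0 ≤ hb x})
    (hsub : Sb ⊆ Ss)
    (hinv : ∀ x ∈ Sb, ∀ t : ℝ, 0 ≤ t → φ x t ∈ Sb)
    (T : ℝ) (hT : 0 < T)
    (hSstar : Sstar = {x | 0 ≤ hb (φ x T) ∧ ∀ τ ∈ Icc (0:ℝ) T, 0 ≤ hs (φ x τ)})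
    (N : ℕ) (hN : 0 < N) (Ts : ℝ) (hTs : Ts = T / N)
    (hbarStar : EuclideanSpace ℝ (Fin n) → ℝ)
    (hhbarStar : ∀ x, hbarStar x =
      min (hb (φ x ((N : ℝ) * Ts)))
        ((Finset.range (N + 1)).inf' Finset.nonempty_range_add_one
          (fun i => hs (φ x ((i : ℝ) * Ts)))))
    (SbarStar : Set (EuclideanSpace ℝ (Fin n)))
    (hSbarStar : SbarStar = {x | 0 ≤ hbarStar x})
    (ls lφ : ℝ) (hls : 0 < ls) (hlφ : 0 < lφ)
    (hlip_s : ∀ x y : EuclideanSpace ℝ (Fin n), |hs x - hs y| ≤ ls * ‖x - y‖)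
    (hlip_φ : ∀ x : EuclideanSpace ℝ (Fin n), ∀ τ₁ ∈ Icc (0:ℝ) T, ∀ τ₂ ∈ Icc (0:ℝ) T,
      ‖φ x τ₁ - φ x τ₂‖ ≤ lφ * |τ₁ - τ₂|)
    (ubarSstar : Set (EuclideanSpace ℝ (Fin n)))
    (hubarSstar : ubarSstar = {x | (1 / 2) * Ts * lφ * ls ≤ hbarStar x}) :
    ubarSstar ⊆ Sstar ∧ Sstar ⊆ SbarStar ∧ SbarStar ⊆ Ss :=
  ubarSstar_subset_Sstar_subset_SbarStar_subset_Ss_general n φ hφ0 hs hb Ss Sstar hSs T hT hSstar N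
    hN Ts hTs hbarStar hhbarStar SbarStar hSbarStar ls lφ hls hlφ hlip_s hlip_φ ubarSstar hubarSstar
end

section
/- With the definitions and assumptions in the context, suppose x_0 ∈ S̄_* and there exists t₁ ≥ 0 with x(t₁) ∈ bd S̄_* (the topological boundary of S̄_*). Then there exists τ ∈ (0, T_s] such that x(t₁ + τ) ∈ S̄_* ⊆ S_s. (If the trajectory leaves S̄_* at some time, it returns to S̄_* within one sample period T_s.) -/
/-!
The sampled barrier `h̄_*` only looks at the backup flow at the sample times `0, T_s, …, N T_s`.
Flowing for one sample period shifts these samples by one; the new last sample lies in the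
forward-invariant set `S_b ⊆ S_s`, so `S̄_*` is invariant under `φ(·, T_s)`. A point on the
frontier of `S̄_*` has `h̄_* = 0`, hence is not in `Γ`. Over the next sample period the
trajectory either enters `Γ ⊆ S̄_*` at some positive time, or follows the backup flow throughout
and ends in `φ(x(t₁), T_s) ∈ S̄_*`.
-/

open Set

section SampledBarrier

variable {X : Type*} (φ : X → ℝ → X) (hs hb : X → ℝ) (N : ℕ) (Ts : ℝ)

def sampledBarrier (x : X) : ℝ :=
  min (hb (φ x ((N : ℝ) * Ts)))
    ((Finset.range (N + 1)).inf' Finset.nonempty_range_add_one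
      (fun i => hs (φ x ((i : ℝ) * Ts))))

variable {φ hs hb N Ts}

theorem sampledBarrier_nonneg_iff {x : X} :
    0 ≤ sampledBarrier φ hs hb N Ts x ↔
      0 ≤ hb (φ x (N * Ts)) ∧ ∀ i ≤ N, 0 ≤ hs (φ x (i * Ts)) := by
  simp only [sampledBarrier, le_min_iff, Finset.le_inf'_iff, Finset.mem_range,
    Nat.lt_succ_iff]

theorem nonneg_of_sampledBarrier_nonneg (hφ0 : ∀ x, φ x 0 = x) {x : X}
    (hx : 0 ≤ sampledBarrier φ hs hb N Ts x) : 0 ≤ hs x := by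
  simpa [hφ0] using (sampledBarrier_nonneg_iff.1 hx).2 0 (Nat.zero_le N)

theorem sampledBarrier_nonneg_flow_sample
    (hφadd : ∀ x s t, 0 ≤ s → 0 ≤ t → φ x (s + t) = φ (φ x s) t)
    (hinv : ∀ x, 0 ≤ hb x → ∀ t, 0 ≤ t → 0 ≤ hb (φ x t))
    (hsub : ∀ x, 0 ≤ hb x → 0 ≤ hs x) (hTs : 0 ≤ Ts) {x : X}
    (hx : 0 ≤ sampledBarrier φ hs hb N Ts x) :
    0 ≤ sampledBarrier φ hs hb N Ts (φ x Ts) := by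
  obtain ⟨hlast, hsamples⟩ := sampledBarrier_nonneg_iff.1 hx
  have shift : ∀ i : ℕ, φ (φ x Ts) (i * Ts) = φ x ((i + 1 : ℕ) * Ts) := fun i => by
    rw [← hφadd x Ts _ hTs (by positivity)]; push_cast; ring_nf
  have hpast : 0 ≤ hb (φ x ((N + 1 : ℕ) * Ts)) := by
    rw [show ((N + 1 : ℕ) : ℝ) * Ts = N * Ts + Ts by push_cast; ring,
      hφadd x _ _ (by positivity) hTs]
    exact hinv _ hlast Ts hTs
  refine sampledBarrier_nonneg_iff.2 ⟨shift N ▸ hpast, fun i hi => shift i ▸ ?_⟩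
  rcases hi.lt_or_eq with hi | rfl
  · exact hsamples (i + 1) hi
  · exact hsub _ hpast

end SampledBarrier

theorem exists_mem_within_of_avoid_imp_mem {X : Type*} {xtraj : ℝ → X} {Γ S : Set X}
    (hΓS : Γ ⊆ S) {t₁ Ts : ℝ} (hTs : 0 < Ts) (hx₁ : xtraj t₁ ∉ Γ)
    (hend : (∀ τ ∈ Icc t₁ (t₁ + Ts), xtraj τ ∉ Γ) → xtraj (t₁ + Ts) ∈ S) :
    ∃ τ, 0 < τ ∧ τ ≤ Ts ∧ xtraj (t₁ + τ) ∈ S := by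
  by_cases hhit : ∃ τ ∈ Icc t₁ (t₁ + Ts), xtraj τ ∈ Γ
  · obtain ⟨τ, ⟨hτ₁, hτ₂⟩, hτΓ⟩ := hhit
    have hlt : t₁ < τ := hτ₁.lt_of_ne (by rintro rfl; exact hx₁ hτΓ)
    exact ⟨τ - t₁, by linarith, by linarith, by rw [add_sub_cancel]; exact hΓS hτΓ⟩
  · exact ⟨Ts, hTs, le_rfl, hend fun τ hτ hτΓ => hhit ⟨τ, hτ, hτΓ⟩⟩

theorem return_to_SbarStar_within_one_sample_period_general
    (n : ℕ)
    (φ : EuclideanSpace ℝ (Fin n) → ℝ → EuclideanSpace ℝ (Fin n))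
    (hφ0 : ∀ x, φ x 0 = x)
    (hφadd : ∀ (x : EuclideanSpace ℝ (Fin n)) (s t : ℝ), 0 ≤ s → 0 ≤ t →
      φ x (s + t) = φ (φ x s) t)
    (hs hb : EuclideanSpace ℝ (Fin n) → ℝ)
    (Ss Sb : Set (EuclideanSpace ℝ (Fin n)))
    (hSs : Ss = {x | 0 ≤ hs x})
    (hSb : Sb = {x | 0 ≤ hb x})
    (hsub : Sb ⊆ Ss)
    (hinv : ∀ x ∈ Sb, ∀ t : ℝ, 0 ≤ t → φ x t ∈ Sb)
    (T : ℝ) (hT : 0 < T)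
    (N : ℕ) (hN : 0 < N) (Ts : ℝ) (hTs : Ts = T / N)
    (hbarStar : EuclideanSpace ℝ (Fin n) → ℝ)
    (hhbarStar : ∀ x, hbarStar x =
      min (hb (φ x ((N : ℝ) * Ts)))
        ((Finset.range (N + 1)).inf' Finset.nonempty_range_add_one
          (fun i => hs (φ x ((i : ℝ) * Ts)))))
    (hbarStar_cont : Continuous hbarStar)
    (SbarStar : Set (EuclideanSpace ℝ (Fin n)))
    (hSbarStar : SbarStar = {x | 0 ≤ hbarStar x})
    (Γ : Set (EuclideanSpace ℝ (Fin n)))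
    (hΓ : Γ ⊆ {x | 0 < hbarStar x})
    (xtraj : ℝ → EuclideanSpace ℝ (Fin n))
    (hflow : ∀ t₂ t₃ : ℝ, 0 ≤ t₂ → t₂ ≤ t₃ →
      (∀ τ ∈ Icc t₂ t₃, xtraj τ ∉ Γ) → xtraj t₃ = φ (xtraj t₂) (t₃ - t₂))
    (t₁ : ℝ) (ht₁ : 0 ≤ t₁)
    (hbd : xtraj t₁ ∈ frontier SbarStar) :
    (∃ τ : ℝ, 0 < τ ∧ τ ≤ Ts ∧ xtraj (t₁ + τ) ∈ SbarStar) ∧ SbarStar ⊆ Ss := by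
  subst hSs hSb hSbarStar
  obtain rfl : hbarStar = sampledBarrier φ hs hb N Ts := funext hhbarStar
  have hTs_pos : 0 < Ts := hTs ▸ div_pos hT (Nat.cast_pos.2 hN)
  have hzero : 0 = sampledBarrier φ hs hb N Ts (xtraj t₁) :=
    frontier_le_subset_eq continuous_const hbarStar_cont hbd
  have hstep := sampledBarrier_nonneg_flow_sample hφadd hinv (fun x hx => hsub hx)
    hTs_pos.le hzero.le
  refine ⟨?_, fun x hx => nonneg_of_sampledBarrier_nonneg hφ0 hx⟩
  have hΓS : Γ ⊆ {x | 0 ≤ sampledBarrier φ hs hb N Ts x} := fun _ hx =>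
    mem_ofPred.2 (mem_ofPred.1 (hΓ hx)).le
  refine exists_mem_within_of_avoid_imp_mem hΓS hTs_pos
    (fun hx₁ => (hΓ hx₁).ne hzero) fun havoid => ?_
  rw [mem_ofPred_eq, hflow t₁ _ ht₁ (by linarith) havoid, add_sub_cancel_left]
  exact hstep

/-- Under the semiflow `φ` on `ℝ^n` with safe set `S_s = {h_s ≥ 0}`, backup
safe set `S_b = {h_b ≥ 0}` with `S_b ⊆ S_s` forward invariant under `φ`, `T_s = T/N`,
continuous `h̄_*(x) = min{h_b(φ(x,N·T_s)), min_{i∈{0,…,N}} h_s(φ(x,i·T_s))}`,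
`S̄_* = {x : h̄_*(x) ≥ 0}`, `Γ ⊆ {x : h̄_*(x) > 0}`, and a closed-loop trajectory `x(·)`
with `x(0) = x₀ ∈ S̄_*` satisfying the backup-flow property (if `x(τ) ∉ Γ` for all
`τ ∈ [t₂,t₃]` then `x(t₃) = φ(x(t₂), t₃ − t₂)`): if `x(t₁) ∈ bd S̄_*` for some `t₁ ≥ 0`,
then there exists `τ ∈ (0, T_s]` with `x(t₁+τ) ∈ S̄_* ⊆ S_s`. -/
theorem return_to_SbarStar_within_one_sample_period
    (n : ℕ) (hn : 0 < n)
    (φ : EuclideanSpace ℝ (Fin n) → ℝ → EuclideanSpace ℝ (Fin n))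
    (hφ0 : ∀ x, φ x 0 = x)
    (hφadd : ∀ (x : EuclideanSpace ℝ (Fin n)) (s t : ℝ), 0 ≤ s → 0 ≤ t →
      φ x (s + t) = φ (φ x s) t)
    (hs hb : EuclideanSpace ℝ (Fin n) → ℝ)
    (Ss Sb : Set (EuclideanSpace ℝ (Fin n)))
    (hSs : Ss = {x | 0 ≤ hs x})
    (hSb : Sb = {x | 0 ≤ hb x})
    (hsub : Sb ⊆ Ss)
    (hinv : ∀ x ∈ Sb, ∀ t : ℝ, 0 ≤ t → φ x t ∈ Sb)
    (T : ℝ) (hT : 0 < T)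
    (N : ℕ) (hN : 0 < N) (Ts : ℝ) (hTs : Ts = T / N)
    (hbarStar : EuclideanSpace ℝ (Fin n) → ℝ)
    (hhbarStar : ∀ x, hbarStar x =
      min (hb (φ x ((N : ℝ) * Ts)))
        ((Finset.range (N + 1)).inf' Finset.nonempty_range_add_one
          (fun i => hs (φ x ((i : ℝ) * Ts)))))
    (hbarStar_cont : Continuous hbarStar)
    (SbarStar : Set (EuclideanSpace ℝ (Fin n)))
    (hSbarStar : SbarStar = {x | 0 ≤ hbarStar x})
    (Γ : Set (EuclideanSpace ℝ (Fin n)))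
    (hΓ : Γ ⊆ {x | 0 < hbarStar x})
    (xtraj : ℝ → EuclideanSpace ℝ (Fin n))
    (x₀ : EuclideanSpace ℝ (Fin n))
    (hxtraj0 : xtraj 0 = x₀)
    (hx₀ : x₀ ∈ SbarStar)
    (hflow : ∀ t₂ t₃ : ℝ, 0 ≤ t₂ → t₂ ≤ t₃ →
      (∀ τ ∈ Icc t₂ t₃, xtraj τ ∉ Γ) → xtraj t₃ = φ (xtraj t₂) (t₃ - t₂))
    (t₁ : ℝ) (ht₁ : 0 ≤ t₁)
    (hbd : xtraj t₁ ∈ frontier SbarStar) :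
    (∃ τ : ℝ, 0 < τ ∧ τ ≤ Ts ∧ xtraj (t₁ + τ) ∈ SbarStar) ∧ SbarStar ⊆ Ss :=
  return_to_SbarStar_within_one_sample_period_general n φ hφ0 hφadd hs hb Ss Sb hSs hSb hsub hinv T
    hT N hN Ts hTs hbarStar hhbarStar hbarStar_cont SbarStar hSbarStar Γ hΓ xtraj hflow t₁ ht₁ hbd
end

section
/- With the definitions and assumptions in the context, suppose ε ≥ (1/2)·T_s·l_φ·l_s and x_0 ∈ S_*. Then for all t ≥ 0, x(t) ∈ S_* ⊆ S_s. (The set S_* is forward invariant under the closed-loop control, so the state remains in the safe set for all time.) -/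
/-!
Every point of `Γ` lies in `S_*`: the sampled barrier exceeds `ε ≥ l_s l_φ T_s / 2` there, and
every `τ ∈ [0, T]` is within `T_s / 2` of a sample time, so by the Lipschitz bounds `h_s ∘ φ(x, ·)`
cannot drop below zero between samples. `S_*` is forward invariant under the backup flow, because
after time `T` the backup trajectory stays in `S_b ⊆ S_s`. Finally, for `t ≥ 0` let `s` be the last
time in `[0, t]` at which the trajectory is in `Γ` (or `s = 0`); on `(s, t]` the closed loop follows
the backup flow, which keeps `x(s) ∈ S_*` inside `S_*`.
-/

open Set

def backupViableSet {α : Type*} (φ : α → ℝ → α) (Ss Sb : Set α) (T : ℝ) : Set α :=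
  {x | φ x T ∈ Sb ∧ ∀ τ ∈ Icc 0 T, φ x τ ∈ Ss}

section BackupViableSet

variable {α : Type*} {φ : α → ℝ → α} {Ss Sb : Set α} {T : ℝ}

theorem backupViableSet_subset (hφ0 : ∀ x, φ x 0 = x) (hT : 0 ≤ T) :
    backupViableSet φ Ss Sb T ⊆ Ss := fun x hx => by
  simpa only [hφ0] using hx.2 0 ⟨le_rfl, hT⟩

theorem flow_mem_backupViableSet
    (hφadd : ∀ x (s t : ℝ), 0 ≤ s → 0 ≤ t → φ x (s + t) = φ (φ x s) t)
    (hsub : Sb ⊆ Ss) (hinv : ∀ x ∈ Sb, ∀ t : ℝ, 0 ≤ t → φ x t ∈ Sb) (hT : 0 ≤ T)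
    {x : α} (hx : x ∈ backupViableSet φ Ss Sb T) {t : ℝ} (ht : 0 ≤ t) :
    φ x t ∈ backupViableSet φ Ss Sb T := by
  obtain ⟨hxT, hxS⟩ := hx
  have after_T : ∀ s, T ≤ s → φ x s ∈ Sb := fun s hs => by
    simpa only [← hφadd x T (s - T) hT (by linarith), add_sub_cancel] using
      hinv _ hxT (s - T) (by linarith)
  refine ⟨?_, fun τ hτ => ?_⟩
  · rw [← hφadd x t T ht hT]
    exact after_T _ (by linarith)
  · rw [← hφadd x t τ ht hτ.1]
    rcases le_or_gt (t + τ) T with h | h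
    · exact hxS _ ⟨by linarith [hτ.1], h⟩
    · exact hsub (after_T _ h.le)

end BackupViableSet

theorem exists_nat_le_abs_sub_mul_le_half {δ τ : ℝ} {N : ℕ} (hδ : 0 < δ)
    (hτ : τ ∈ Icc 0 (N * δ)) : ∃ i ≤ N, |τ - i * δ| ≤ δ / 2 := by
  set y := τ / δ
  have hy0 : 0 ≤ y := div_nonneg hτ.1 hδ.le
  have hyN : y ≤ N := (div_le_iff₀ hδ).2 hτ.2
  refine ⟨⌊y + 1 / 2⌋₊, ?_, ?_⟩
  · have : ⌊y + 1 / 2⌋₊ < N + 1 := by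
      rw [Nat.floor_lt (by positivity)]
      push_cast
      linarith
    omega
  · have h₁ : (⌊y + 1 / 2⌋₊ : ℝ) ≤ y + 1 / 2 := Nat.floor_le (by positivity)
    have h₂ : y + 1 / 2 < ⌊y + 1 / 2⌋₊ + 1 := Nat.lt_floor_add_one _
    have hτy : τ = y * δ := (div_mul_cancel₀ τ hδ.ne').symm
    have hyi : |y - ⌊y + 1 / 2⌋₊| ≤ 1 / 2 := abs_le.2 ⟨by linarith, by linarith⟩
    calc |τ - ⌊y + 1 / 2⌋₊ * δ| = |y - ⌊y + 1 / 2⌋₊| * δ := by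
          rw [hτy, ← sub_mul, abs_mul, abs_of_pos hδ]
      _ ≤ 1 / 2 * δ := mul_le_mul_of_nonneg_right hyi hδ.le
      _ = δ / 2 := by ring

theorem nonneg_of_sampled {g : ℝ → ℝ} {L δ : ℝ} {N : ℕ} (hL : 0 ≤ L) (hδ : 0 < δ)
    (hg : ∀ τ₁ ∈ Icc 0 (N * δ), ∀ τ₂ ∈ Icc 0 (N * δ), |g τ₁ - g τ₂| ≤ L * |τ₁ - τ₂|)
    (hsample : ∀ i ≤ N, L * δ / 2 ≤ g (i * δ)) {τ : ℝ} (hτ : τ ∈ Icc 0 (N * δ)) :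
    0 ≤ g τ := by
  obtain ⟨i, hiN, hi⟩ := exists_nat_le_abs_sub_mul_le_half hδ hτ
  have hi_mem : (i : ℝ) * δ ∈ Icc 0 (N * δ) :=
    ⟨by positivity, mul_le_mul_of_nonneg_right (by exact_mod_cast hiN) hδ.le⟩
  have hclose : |g τ - g (i * δ)| ≤ L * δ / 2 := by
    calc |g τ - g (i * δ)| ≤ L * |τ - i * δ| := hg τ hτ _ hi_mem
      _ ≤ L * (δ / 2) := mul_le_mul_of_nonneg_left hi hL
      _ = L * δ / 2 := by ring
  linarith [(abs_le.1 hclose).1, hsample i hiN]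

theorem mem_backupViableSet_of_sampled {E : Type*} [SeminormedAddCommGroup E]
    {φ : E → ℝ → E} {hs : E → ℝ} {Sb : Set E} {ls lφ δ : ℝ} {N : ℕ}
    (hls : 0 ≤ ls) (hlφ : 0 ≤ lφ) (hδ : 0 < δ)
    (hlip_s : ∀ x y : E, |hs x - hs y| ≤ ls * ‖x - y‖) {x : E}
    (hlip_φ : ∀ τ₁ ∈ Icc 0 (N * δ), ∀ τ₂ ∈ Icc 0 (N * δ), ‖φ x τ₁ - φ x τ₂‖ ≤ lφ * |τ₁ - τ₂|)
    (hxT : φ x (N * δ) ∈ Sb) (hsample : ∀ i ≤ N, ls * lφ * δ / 2 ≤ hs (φ x (i * δ))) :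
    x ∈ backupViableSet φ {y | 0 ≤ hs y} Sb (N * δ) := by
  refine ⟨hxT, fun τ hτ => nonneg_of_sampled (g := fun τ => hs (φ x τ)) (by positivity) hδ
    (fun τ₁ h₁ τ₂ h₂ => ?_) hsample hτ⟩
  calc |hs (φ x τ₁) - hs (φ x τ₂)| ≤ ls * ‖φ x τ₁ - φ x τ₂‖ := hlip_s _ _
    _ ≤ ls * (lφ * |τ₁ - τ₂|) := mul_le_mul_of_nonneg_left (hlip_φ τ₁ h₁ τ₂ h₂) hls
    _ = ls * lφ * |τ₁ - τ₂| := by ring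

theorem exists_last_mem_or_eq_zero {α : Type*} [TopologicalSpace α] {f : ℝ → α} {Γ : Set α}
    (hf : Continuous f) (hΓ : IsClosed Γ) {t : ℝ} (ht : 0 ≤ t) :
    ∃ s ∈ Icc 0 t, (s = 0 ∨ f s ∈ Γ) ∧ ∀ τ, s < τ → τ ≤ t → f τ ∉ Γ := by
  -- The extra point `0` covers the case that `f` never meets `Γ` on `[0, t]`.
  have hK : IsClosed (insert 0 (Icc 0 t ∩ f ⁻¹' Γ)) := by
    rw [insert_eq]
    exact isClosed_singleton.union (isClosed_Icc.inter (hΓ.preimage hf))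
  set K := insert 0 (Icc 0 t ∩ f ⁻¹' Γ)
  have hKt : ∀ τ ∈ K, τ ≤ t := by rintro _ (rfl | ⟨hτ, -⟩); exacts [ht, hτ.2]
  have hKbdd : BddAbove K := ⟨t, hKt⟩
  have hsK : sSup K ∈ K := hK.csSup_mem (insert_nonempty _ _) hKbdd
  refine ⟨sSup K, ⟨le_csSup hKbdd (mem_insert _ _), csSup_le (insert_nonempty _ _) hKt⟩,
    hsK.imp id fun h => h.2, fun τ hsτ hτt hτΓ => ?_⟩
  have hτ0 : 0 ≤ τ := (le_csSup hKbdd (mem_insert _ _)).trans hsτ.le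
  exact (le_csSup hKbdd (mem_insert_of_mem _ ⟨⟨hτ0, hτt⟩, hτΓ⟩)).not_gt hsτ

theorem trajectory_mem_of_backup_flow {α : Type*} [TopologicalSpace α] {φ : α → ℝ → α}
    {S Γ : Set α} {x : ℝ → α} (hS : ∀ y ∈ S, ∀ t : ℝ, 0 ≤ t → φ y t ∈ S) (hΓS : Γ ⊆ S)
    (hΓ : IsClosed Γ) (hx : Continuous x) (hx0 : x 0 ∈ S)
    (hflow : ∀ t₂ t₃ : ℝ, 0 ≤ t₂ → t₂ ≤ t₃ →
      (∀ τ : ℝ, t₂ < τ → τ ≤ t₃ → x τ ∉ Γ) → x t₃ = φ (x t₂) (t₃ - t₂))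
    {t : ℝ} (ht : 0 ≤ t) : x t ∈ S := by
  obtain ⟨s, ⟨hs0, hst⟩, hsS, hafter⟩ := exists_last_mem_or_eq_zero hx hΓ ht
  have hxs : x s ∈ S := hsS.elim (fun h => h ▸ hx0) (fun h => hΓS h)
  rw [hflow s t hs0 hst hafter]
  exact hS _ hxs _ (sub_nonneg.2 hst)

theorem closed_loop_forward_invariance_of_Sstar_general
    (n : ℕ)
    (φ : EuclideanSpace ℝ (Fin n) → ℝ → EuclideanSpace ℝ (Fin n))
    (hφ0 : ∀ x, φ x 0 = x)
    (hφadd : ∀ (x : EuclideanSpace ℝ (Fin n)) (s t : ℝ), 0 ≤ s → 0 ≤ t →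
      φ x (s + t) = φ (φ x s) t)
    (hs hb : EuclideanSpace ℝ (Fin n) → ℝ)
    (Ss Sb Sstar : Set (EuclideanSpace ℝ (Fin n)))
    (hSs : Ss = {x | 0 ≤ hs x})
    (hSb : Sb = {x | 0 ≤ hb x})
    (hsub : Sb ⊆ Ss)
    (hinv : ∀ x ∈ Sb, ∀ t : ℝ, 0 ≤ t → φ x t ∈ Sb)
    (T : ℝ) (hT : 0 < T)
    (hSstar : Sstar = {x | 0 ≤ hb (φ x T) ∧ ∀ τ ∈ Icc (0:ℝ) T, 0 ≤ hs (φ x τ)})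
    (N : ℕ) (hN : 0 < N) (Ts : ℝ) (hTs : Ts = T / N)
    (hbarStar : EuclideanSpace ℝ (Fin n) → ℝ)
    (hhbarStar : ∀ x, hbarStar x =
      min (hb (φ x ((N : ℝ) * Ts)))
        ((Finset.range (N + 1)).inf' Finset.nonempty_range_add_one
          (fun i => hs (φ x ((i : ℝ) * Ts)))))
    (ls lφ : ℝ) (hls : 0 < ls) (hlφ : 0 < lφ)
    (hlip_s : ∀ x y : EuclideanSpace ℝ (Fin n), |hs x - hs y| ≤ ls * ‖x - y‖)
    (hlip_φ : ∀ x : EuclideanSpace ℝ (Fin n), ∀ τ₁ ∈ Icc (0:ℝ) T, ∀ τ₂ ∈ Icc (0:ℝ) T,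
      ‖φ x τ₁ - φ x τ₂‖ ≤ lφ * |τ₁ - τ₂|)
    (h : EuclideanSpace ℝ (Fin n) → ℝ)
    (hlt : ∀ x, h x < hbarStar x)
    (ε : ℝ) (hε : (1 / 2) * Ts * lφ * ls ≤ ε)
    (Γ : Set (EuclideanSpace ℝ (Fin n)))
    (hΓ : Γ ⊆ {x | ε ≤ h x})
    (hΓclosed : IsClosed Γ)
    (xtraj : ℝ → EuclideanSpace ℝ (Fin n))
    (hxcont : Continuous xtraj)
    (x₀ : EuclideanSpace ℝ (Fin n))
    (hxtraj0 : xtraj 0 = x₀)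
    (hx₀ : x₀ ∈ Sstar)
    (hflow : ∀ t₂ t₃ : ℝ, 0 ≤ t₂ → t₂ ≤ t₃ →
      (∀ τ : ℝ, t₂ < τ → τ ≤ t₃ → xtraj τ ∉ Γ) → xtraj t₃ = φ (xtraj t₂) (t₃ - t₂)) :
    (∀ t : ℝ, 0 ≤ t → xtraj t ∈ Sstar) ∧ Sstar ⊆ Ss := by
  have hTN : T = N * Ts := by rw [hTs]; field_simp
  subst hSs hSb hTN
  obtain rfl : Sstar = backupViableSet φ {x | 0 ≤ hs x} {x | 0 ≤ hb x} (N * Ts) := hSstar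
  have hTs0 : 0 < Ts := pos_of_mul_pos_right hT (Nat.cast_nonneg N)
  have hε0 : 0 ≤ ε := le_trans (by positivity) hε
  have hΓS : Γ ⊆ backupViableSet φ {x | 0 ≤ hs x} {x | 0 ≤ hb x} (N * Ts) := by
    intro x hx
    have hbar : ε < hbarStar x := (hΓ hx).trans_lt (hlt x)
    rw [hhbarStar, lt_min_iff, Finset.lt_inf'_iff] at hbar
    exact mem_backupViableSet_of_sampled hls.le hlφ.le hTs0 hlip_s (hlip_φ x)
      (show 0 ≤ hb _ by linarith [hbar.1])
      fun i hi => by linarith [hbar.2 i (Finset.mem_range_succ_iff.2 hi)]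
  exact ⟨fun t ht => trajectory_mem_of_backup_flow
      (fun y hy t ht => flow_mem_backupViableSet hφadd hsub hinv hT.le hy ht)
      hΓS hΓclosed hxcont (hxtraj0 ▸ hx₀) hflow ht,
    backupViableSet_subset hφ0 hT.le⟩

/-- Under the semiflow `φ` on `ℝ^n` with safe set `S_s = {h_s ≥ 0}`, backup
safe set `S_b = {h_b ≥ 0}` with `S_b ⊆ S_s` forward invariant under `φ`,
`S_* = {x : h_*(x) ≥ 0}` where `h_*(x) = min{h_b(φ(x,T)), inf_{τ∈[0,T]} h_s(φ(x,τ))}`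
(so `x ∈ S_*` iff `h_b(φ(x,T)) ≥ 0` and `h_s(φ(x,τ)) ≥ 0` for all `τ ∈ [0,T]`),
`T_s = T/N`, `h̄_*` the sampled barrier function, `h_s` Lipschitz with constant `l_s > 0`,
`τ ↦ φ(x,τ)` Lipschitz on `[0,T]` with constant `l_φ > 0`, `h < h̄_*` pointwise,
`Γ ⊆ {x : h(x) ≥ ε}` closed, and a continuous closed-loop trajectory `x(·)` with
`x(0) = x₀` satisfying the backup-flow property (if `x(τ) ∉ Γ` for all `τ ∈ (t₂,t₃]`
then `x(t₃) = φ(x(t₂), t₃ − t₂)`): if `ε ≥ (1/2)·T_s·l_φ·l_s` and `x₀ ∈ S_*`, then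
for all `t ≥ 0`, `x(t) ∈ S_* ⊆ S_s`. -/
theorem closed_loop_forward_invariance_of_Sstar
    (n : ℕ) (hn : 0 < n)
    (φ : EuclideanSpace ℝ (Fin n) → ℝ → EuclideanSpace ℝ (Fin n))
    (hφ0 : ∀ x, φ x 0 = x)
    (hφadd : ∀ (x : EuclideanSpace ℝ (Fin n)) (s t : ℝ), 0 ≤ s → 0 ≤ t →
      φ x (s + t) = φ (φ x s) t)
    (hs hb : EuclideanSpace ℝ (Fin n) → ℝ)
    (Ss Sb Sstar : Set (EuclideanSpace ℝ (Fin n)))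
    (hSs : Ss = {x | 0 ≤ hs x})
    (hSb : Sb = {x | 0 ≤ hb x})
    (hsub : Sb ⊆ Ss)
    (hinv : ∀ x ∈ Sb, ∀ t : ℝ, 0 ≤ t → φ x t ∈ Sb)
    (T : ℝ) (hT : 0 < T)
    (hSstar : Sstar = {x | 0 ≤ hb (φ x T) ∧ ∀ τ ∈ Icc (0:ℝ) T, 0 ≤ hs (φ x τ)})
    (N : ℕ) (hN : 0 < N) (Ts : ℝ) (hTs : Ts = T / N)
    (hbarStar : EuclideanSpace ℝ (Fin n) → ℝ)
    (hhbarStar : ∀ x, hbarStar x =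
      min (hb (φ x ((N : ℝ) * Ts)))
        ((Finset.range (N + 1)).inf' Finset.nonempty_range_add_one
          (fun i => hs (φ x ((i : ℝ) * Ts)))))
    (ls lφ : ℝ) (hls : 0 < ls) (hlφ : 0 < lφ)
    (hlip_s : ∀ x y : EuclideanSpace ℝ (Fin n), |hs x - hs y| ≤ ls * ‖x - y‖)
    (hlip_φ : ∀ x : EuclideanSpace ℝ (Fin n), ∀ τ₁ ∈ Icc (0:ℝ) T, ∀ τ₂ ∈ Icc (0:ℝ) T,
      ‖φ x τ₁ - φ x τ₂‖ ≤ lφ * |τ₁ - τ₂|)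
    (h : EuclideanSpace ℝ (Fin n) → ℝ)
    (hlt : ∀ x, h x < hbarStar x)
    (ε : ℝ) (hε : (1 / 2) * Ts * lφ * ls ≤ ε)
    (Γ : Set (EuclideanSpace ℝ (Fin n)))
    (hΓ : Γ ⊆ {x | ε ≤ h x})
    (hΓclosed : IsClosed Γ)
    (xtraj : ℝ → EuclideanSpace ℝ (Fin n))
    (hxcont : Continuous xtraj)
    (x₀ : EuclideanSpace ℝ (Fin n))
    (hxtraj0 : xtraj 0 = x₀)
    (hx₀ : x₀ ∈ Sstar)
    (hflow : ∀ t₂ t₃ : ℝ, 0 ≤ t₂ → t₂ ≤ t₃ →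
      (∀ τ : ℝ, t₂ < τ → τ ≤ t₃ → xtraj τ ∉ Γ) → xtraj t₃ = φ (xtraj t₂) (t₃ - t₂)) :
    (∀ t : ℝ, 0 ≤ t → xtraj t ∈ Sstar) ∧ Sstar ⊆ Ss :=
  closed_loop_forward_invariance_of_Sstar_general n φ hφ0 hφadd hs hb Ss Sb Sstar hSs hSb hsub hinv
    T hT hSstar N hN Ts hTs hbarStar hhbarStar ls lφ hls hlφ hlip_s hlip_φ h hlt ε hε Γ hΓ hΓclosed
    xtraj hxcont x₀ hxtraj0 hx₀ hflow
end

section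
/- With the definitions and assumptions in the context, let ℓ ∈ {1,…,ν} and x_0 ∈ S_{*_ℓ}. Then: (a) for all t ≥ T, φ_ℓ(x_0, t) ∈ S_{b_ℓ}; and (b) for all t ≥ 0, φ_ℓ(x_0, t) ∈ S_{*_ℓ} ⊆ S_*. -/
open Set

/-- With `ν` backup semiflows `φ_j` on `ℝ^n`, safe set `S_s = {h_s ≥ 0}`,
backup safe sets `S_{b_j} = {h_{b_j} ≥ 0} ⊆ S_s` forward invariant under `φ_j`,
`S_{*_j} = {x : h_{*_j}(x) ≥ 0}` where
`h_{*_j}(x) = min{h_{b_j}(φ_j(x,T)), inf_{τ∈[0,T]} h_s(φ_j(x,τ))}`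
(so `x ∈ S_{*_j}` iff `h_{b_j}(φ_j(x,T)) ≥ 0` and `h_s(φ_j(x,τ)) ≥ 0` for all `τ ∈ [0,T]`),
and `S_* = {x : max_j h_{*_j}(x) ≥ 0}` (i.e. `x ∈ S_*` iff `x ∈ S_{*_j}` for some `j`):
if `ℓ ∈ {1,…,ν}` and `x₀ ∈ S_{*_ℓ}`, then (a) for all `t ≥ T`, `φ_ℓ(x₀,t) ∈ S_{b_ℓ}`,
and (b) for all `t ≥ 0`, `φ_ℓ(x₀,t) ∈ S_{*_ℓ} ⊆ S_*`. -/
theorem multi_backup_Sstar_invariance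
    (n ν : ℕ) (hn : 0 < n) (hν : 0 < ν)
    (hs : EuclideanSpace ℝ (Fin n) → ℝ)
    (Ss : Set (EuclideanSpace ℝ (Fin n)))
    (hSs : Ss = {x | 0 ≤ hs x})
    (φ : Fin ν → EuclideanSpace ℝ (Fin n) → ℝ → EuclideanSpace ℝ (Fin n))
    (hφ0 : ∀ j x, φ j x 0 = x)
    (hφadd : ∀ (j : Fin ν) (x : EuclideanSpace ℝ (Fin n)) (s t : ℝ), 0 ≤ s → 0 ≤ t →
      φ j x (s + t) = φ j (φ j x s) t)
    (hb : Fin ν → EuclideanSpace ℝ (Fin n) → ℝ)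
    (Sb : Fin ν → Set (EuclideanSpace ℝ (Fin n)))
    (hSb : ∀ j, Sb j = {x | 0 ≤ hb j x})
    (hsub : ∀ j, Sb j ⊆ Ss)
    (hinv : ∀ j, ∀ x ∈ Sb j, ∀ t : ℝ, 0 ≤ t → φ j x t ∈ Sb j)
    (T : ℝ) (hT : 0 < T)
    (Sstarj : Fin ν → Set (EuclideanSpace ℝ (Fin n)))
    (hSstarj : ∀ j, Sstarj j =
      {x | 0 ≤ hb j (φ j x T) ∧ ∀ τ ∈ Icc (0:ℝ) T, 0 ≤ hs (φ j x τ)})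
    (Sstar : Set (EuclideanSpace ℝ (Fin n)))
    (hSstar : Sstar = {x | ∃ j : Fin ν, x ∈ Sstarj j})
    (ℓ : Fin ν)
    (x₀ : EuclideanSpace ℝ (Fin n)) (hx₀ : x₀ ∈ Sstarj ℓ) :
    (∀ t : ℝ, T ≤ t → φ ℓ x₀ t ∈ Sb ℓ) ∧
    (∀ t : ℝ, 0 ≤ t → φ ℓ x₀ t ∈ Sstarj ℓ) ∧
    Sstarj ℓ ⊆ Sstar := by
  rw [hSstarj] at hx₀
  obtain ⟨hbT, hsτ⟩ := hx₀
  have hTnn : (0:ℝ) ≤ T := hT.le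
  have ha : ∀ t : ℝ, T ≤ t → φ ℓ x₀ t ∈ Sb ℓ := by
    intro t ht
    have h1 : φ ℓ x₀ t = φ ℓ (φ ℓ x₀ T) (t - T) := by
      have := hφadd ℓ x₀ T (t - T) hTnn (by linarith)
      simpa using this
    rw [h1]
    refine hinv ℓ _ ?_ _ (by linarith)
    rw [hSb]; exact hbT
  refine ⟨ha, ?_, ?_⟩
  · intro t ht
    rw [hSstarj]
    have key : ∀ τ : ℝ, 0 ≤ τ → φ ℓ (φ ℓ x₀ t) τ = φ ℓ x₀ (t + τ) := by
      intro τ hτ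
      exact (hφadd ℓ x₀ t τ ht hτ).symm
    constructor
    · rw [key T hTnn]
      have h2 := ha (t + T) (by linarith)
      rw [hSb] at h2
      exact h2
    · intro τ hτ
      rw [key τ hτ.1]
      by_cases hc : t + τ ≤ T
      · exact hsτ (t + τ) ⟨by linarith [hτ.1], hc⟩
      · have := ha (t + τ) (by linarith)
        have := hsub ℓ this
        rw [hSs] at this
        exact this
  · intro x hx
    rw [hSstar]
    exact ⟨ℓ, hx⟩
end

section
/- With the definitions and assumptions in the context, the following hold: (a) for each j ∈ {1,…,ν}, underbar-S_{*_j} ⊆ S_{*_j} ⊆ S̄_{*_j} ⊆ S_s, where underbar-S_{*_j} = {x : h̄_{*_j}(x) ≥ (1/2)·T_s·l_φ·l_s}; and (b) underbar-S_* ⊆ S_* ⊆ S̄_* ⊆ S_s, where underbar-S_* = {x : h̄_*(x) ≥ (1/2)·T_s·l_φ·l_s}. -/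
/-!
Between two consecutive sample times `i·T_s` every time `τ` lies within `T_s/2` of a sample, and
`τ ↦ h_s(φ_j(x,τ))` is `l_φ·l_s`-Lipschitz, so it drops below its sampled minimum by at most
`(1/2)·T_s·l_φ·l_s`. This margin turns the sampled condition into the continuous-time one; the
other inclusions only compare an infimum over `[0,T]` with a minimum over sample times in it,
the sample `τ = 0` giving `S̄_{*_j} ⊆ S_s`. Part (b) follows because each set of (b) is the
union over `j` of the corresponding sets of (a).
-/

open Set Finset

theorem exists_mem_range_abs_sub_mul_le_half {N : ℕ} {Ts τ : ℝ} (hTs : 0 < Ts)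
    (hτ : τ ∈ Icc 0 (N * Ts)) : ∃ i ∈ range (N + 1), |τ - i * Ts| ≤ Ts / 2 := by
  have h0 : 0 ≤ τ / Ts := div_nonneg hτ.1 hTs.le
  have hN : τ / Ts ≤ N := (div_le_iff₀ hTs).mpr hτ.2
  have hm0 : 0 ≤ round (τ / Ts) := by
    rw [round_eq]; exact Int.le_floor.mpr (by push_cast; linarith)
  have hmN : round (τ / Ts) < N + 1 := by
    rw [round_eq]; exact Int.floor_lt.mpr (by push_cast; linarith)
  refine ⟨(round (τ / Ts)).toNat, mem_range.mpr (by omega), ?_⟩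
  have hcast : ((round (τ / Ts)).toNat : ℝ) = round (τ / Ts) := by
    exact_mod_cast Int.toNat_of_nonneg hm0
  calc |τ - (round (τ / Ts)).toNat * Ts| = |τ / Ts - round (τ / Ts)| * Ts := by
        rw [hcast, ← abs_of_pos hTs, ← abs_mul, abs_of_pos hTs, sub_mul, div_mul_cancel₀ _ hTs.ne']
    _ ≤ 1 / 2 * Ts := by gcongr; exact abs_sub_round _
    _ = Ts / 2 := by ring

theorem abs_sub_comp_le_mul_abs_sub {E : Type*} [SeminormedAddCommGroup E] {f : E → ℝ}
    {γ : ℝ → E} {s : Set ℝ} {lf lγ : ℝ} (hf : ∀ x y, |f x - f y| ≤ lf * ‖x - y‖) (hlf : 0 ≤ lf)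
    (hγ : ∀ τ₁ ∈ s, ∀ τ₂ ∈ s, ‖γ τ₁ - γ τ₂‖ ≤ lγ * |τ₁ - τ₂|) :
    ∀ τ₁ ∈ s, ∀ τ₂ ∈ s, |f (γ τ₁) - f (γ τ₂)| ≤ lγ * lf * |τ₁ - τ₂| := by
  intro τ₁ h₁ τ₂ h₂
  calc |f (γ τ₁) - f (γ τ₂)| ≤ lf * ‖γ τ₁ - γ τ₂‖ := hf _ _
    _ ≤ lf * (lγ * |τ₁ - τ₂|) := by gcongr; exact hγ τ₁ h₁ τ₂ h₂
    _ = lγ * lf * |τ₁ - τ₂| := by ring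

theorem setOf_le_univ_sup'_eq_iUnion {α ι β : Type*} [Fintype ι] [LinearOrder β]
    (H : (univ : Finset ι).Nonempty) (f : ι → α → β) (c : β) :
    {x | c ≤ univ.sup' H fun i => f i x} = ⋃ i, {x | c ≤ f i x} := by
  ext x
  simp [Finset.le_sup'_iff]

noncomputable def sampledInf (g : ℝ → ℝ) (N : ℕ) (Ts : ℝ) : ℝ :=
  (range (N + 1)).inf' nonempty_range_add_one fun i => g (i * Ts)

section Sampling

variable {g : ℝ → ℝ} {N : ℕ} {Ts L b : ℝ}

theorem sampledInf_le {i : ℕ} (hi : i ≤ N) : sampledInf g N Ts ≤ g (i * Ts) :=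
  inf'_le _ (mem_range.mpr (Nat.lt_succ_of_le hi))

theorem sampledInf_sub_le (hTs : 0 < Ts) (hL : 0 ≤ L)
    (hg : ∀ τ₁ ∈ Icc 0 (N * Ts), ∀ τ₂ ∈ Icc 0 (N * Ts), |g τ₁ - g τ₂| ≤ L * |τ₁ - τ₂|)
    {τ : ℝ} (hτ : τ ∈ Icc 0 (N * Ts)) : sampledInf g N Ts - 1 / 2 * Ts * L ≤ g τ := by
  obtain ⟨i, hi, hnear⟩ := exists_mem_range_abs_sub_mul_le_half hTs hτ
  have hiN : i ≤ N := Nat.lt_succ_iff.mp (mem_range.mp hi)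
  have hsample : (i : ℝ) * Ts ∈ Icc 0 (N * Ts) := ⟨by positivity, by gcongr⟩
  have hdrop : g (i * Ts) - g τ ≤ L * (Ts / 2) :=
    calc g (i * Ts) - g τ ≤ |g τ - g (i * Ts)| := by rw [abs_sub_comm]; exact le_abs_self _
      _ ≤ L * |τ - i * Ts| := hg τ hτ _ hsample
      _ ≤ L * (Ts / 2) := by gcongr
  linarith [sampledInf_le (g := g) (Ts := Ts) hiN]

theorem forall_nonneg_of_le_min_sampledInf (hTs : 0 < Ts) (hL : 0 ≤ L)
    (hg : ∀ τ₁ ∈ Icc 0 (N * Ts), ∀ τ₂ ∈ Icc 0 (N * Ts), |g τ₁ - g τ₂| ≤ L * |τ₁ - τ₂|)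
    (h : 1 / 2 * Ts * L ≤ min b (sampledInf g N Ts)) :
    0 ≤ b ∧ ∀ τ ∈ Icc 0 (N * Ts), 0 ≤ g τ := by
  have hmargin : 0 ≤ 1 / 2 * Ts * L := by positivity
  refine ⟨by linarith [min_le_left b (sampledInf g N Ts)], fun τ hτ => ?_⟩
  linarith [min_le_right b (sampledInf g N Ts), sampledInf_sub_le hTs hL hg hτ]

theorem nonneg_min_sampledInf (hTs : 0 ≤ Ts) (hb : 0 ≤ b)
    (hg : ∀ τ ∈ Icc 0 (N * Ts), 0 ≤ g τ) : 0 ≤ min b (sampledInf g N Ts) := by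
  refine le_min hb (le_inf' _ _ fun i hi => hg _ ⟨by positivity, ?_⟩)
  gcongr
  exact_mod_cast Nat.lt_succ_iff.mp (mem_range.mp hi)

theorem nonneg_zero_of_nonneg_min_sampledInf (h : 0 ≤ min b (sampledInf g N Ts)) : 0 ≤ g 0 := by
  simpa using h.trans ((min_le_right _ _).trans (sampledInf_le (Nat.zero_le N)))

end Sampling

theorem multi_backup_set_inclusions_general
    (n ν : ℕ) (hν : 0 < ν)
    (hs : EuclideanSpace ℝ (Fin n) → ℝ)
    (Ss : Set (EuclideanSpace ℝ (Fin n)))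
    (hSs : Ss = {x | 0 ≤ hs x})
    (φ : Fin ν → EuclideanSpace ℝ (Fin n) → ℝ → EuclideanSpace ℝ (Fin n))
    (hφ0 : ∀ j x, φ j x 0 = x)
    (hb : Fin ν → EuclideanSpace ℝ (Fin n) → ℝ)
    (T : ℝ) (hT : 0 < T)
    (Sstarj : Fin ν → Set (EuclideanSpace ℝ (Fin n)))
    (hSstarj : ∀ j, Sstarj j =
      {x | 0 ≤ hb j (φ j x T) ∧ ∀ τ ∈ Icc (0:ℝ) T, 0 ≤ hs (φ j x τ)})
    (Sstar : Set (EuclideanSpace ℝ (Fin n)))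
    (hSstar : Sstar = {x | ∃ j : Fin ν, x ∈ Sstarj j})
    (N : ℕ) (hN : 0 < N) (Ts : ℝ) (hTs : Ts = T / N)
    (hbarStarj : Fin ν → EuclideanSpace ℝ (Fin n) → ℝ)
    (hhbarStarj : ∀ j x, hbarStarj j x =
      min (hb j (φ j x ((N : ℝ) * Ts)))
        ((Finset.range (N + 1)).inf' Finset.nonempty_range_add_one
          (fun i => hs (φ j x ((i : ℝ) * Ts)))))
    (hbarStar : EuclideanSpace ℝ (Fin n) → ℝ)
    (hhbarStar : ∀ x, hbarStar x =
      Finset.univ.sup' ⟨⟨0, hν⟩, Finset.mem_univ _⟩ (fun j => hbarStarj j x))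
    (SbarStarj : Fin ν → Set (EuclideanSpace ℝ (Fin n)))
    (hSbarStarj : ∀ j, SbarStarj j = {x | 0 ≤ hbarStarj j x})
    (SbarStar : Set (EuclideanSpace ℝ (Fin n)))
    (hSbarStar : SbarStar = {x | 0 ≤ hbarStar x})
    (ls lφ : ℝ) (hls : 0 < ls) (hlφ : 0 < lφ)
    (hlip_s : ∀ x y : EuclideanSpace ℝ (Fin n), |hs x - hs y| ≤ ls * ‖x - y‖)
    (hlip_φ : ∀ j, ∀ x : EuclideanSpace ℝ (Fin n), ∀ τ₁ ∈ Icc (0:ℝ) T, ∀ τ₂ ∈ Icc (0:ℝ) T,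
      ‖φ j x τ₁ - φ j x τ₂‖ ≤ lφ * |τ₁ - τ₂|)
    (ubarSstarj : Fin ν → Set (EuclideanSpace ℝ (Fin n)))
    (hubarSstarj : ∀ j, ubarSstarj j = {x | (1 / 2) * Ts * lφ * ls ≤ hbarStarj j x})
    (ubarSstar : Set (EuclideanSpace ℝ (Fin n)))
    (hubarSstar : ubarSstar = {x | (1 / 2) * Ts * lφ * ls ≤ hbarStar x}) :
    (∀ j : Fin ν, ubarSstarj j ⊆ Sstarj j ∧ Sstarj j ⊆ SbarStarj j ∧ SbarStarj j ⊆ Ss) ∧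
    (ubarSstar ⊆ Sstar ∧ Sstar ⊆ SbarStar ∧ SbarStar ⊆ Ss) := by
  have hTs0 : 0 < Ts := hTs ▸ div_pos hT (Nat.cast_pos.mpr hN)
  have hNTs : (N : ℝ) * Ts = T := by rw [hTs]; field_simp
  subst hNTs hSs
  have hL : 0 ≤ lφ * ls := by positivity
  have hpart : ∀ j, ubarSstarj j ⊆ Sstarj j ∧ Sstarj j ⊆ SbarStarj j ∧
      SbarStarj j ⊆ {x | 0 ≤ hs x} := by
    intro j
    have hg x := abs_sub_comp_le_mul_abs_sub hlip_s hls.le (hlip_φ j x)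
    simp only [Set.subset_def, hubarSstarj, hSstarj, hSbarStarj, hhbarStarj]
    refine ⟨fun x hx => ?_, fun x hx => nonneg_min_sampledInf hTs0.le hx.1 hx.2,
      fun x hx => ?_⟩
    · rw [mul_assoc] at hx
      exact forall_nonneg_of_le_min_sampledInf hTs0 hL (hg x) hx
    · simpa [hφ0] using nonneg_zero_of_nonneg_min_sampledInf (g := fun τ => hs (φ j x τ)) hx
  have hubar : ubarSstar = ⋃ j, ubarSstarj j := by
    simp only [hubarSstar, hubarSstarj, hhbarStar]; exact setOf_le_univ_sup'_eq_iUnion _ _ _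
  have hbar : SbarStar = ⋃ j, SbarStarj j := by
    simp only [hSbarStar, hSbarStarj, hhbarStar]; exact setOf_le_univ_sup'_eq_iUnion _ _ _
  have hstar : Sstar = ⋃ j, Sstarj j := by rw [hSstar]; ext; simp
  rw [hubar, hbar, hstar]
  exact ⟨hpart, iUnion_mono fun j => (hpart j).1, iUnion_mono fun j => (hpart j).2.1,
    iUnion_subset fun j => (hpart j).2.2⟩

/-- With `ν` backup semiflows `φ_j` on `ℝ^n`, safe set `S_s = {h_s ≥ 0}`,
backup safe sets `S_{b_j} = {h_{b_j} ≥ 0} ⊆ S_s` forward invariant under `φ_j`,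
`h_{*_j}(x) = min{h_{b_j}(φ_j(x,T)), inf_{τ∈[0,T]} h_s(φ_j(x,τ))}` (so `x ∈ S_{*_j}` iff
`h_{b_j}(φ_j(x,T)) ≥ 0` and `h_s(φ_j(x,τ)) ≥ 0` for all `τ ∈ [0,T]`),
`S_* = {x : max_j h_{*_j}(x) ≥ 0}` (i.e. `x ∈ S_*` iff `x ∈ S_{*_j}` for some `j`),
`T_s = T/N`, `h̄_{*_j}`, `h̄_* = max_j h̄_{*_j}`, `S̄_{*_j}`, `S̄_*` the sampled versions,
`h_s` Lipschitz with constant `l_s > 0`, and `τ ↦ φ_j(x,τ)` Lipschitz on `[0,T]` with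
constant `l_φ > 0`: (a) for each `j`, `underbar-S_{*_j} ⊆ S_{*_j} ⊆ S̄_{*_j} ⊆ S_s`
where `underbar-S_{*_j} = {x : h̄_{*_j}(x) ≥ (1/2)·T_s·l_φ·l_s}`, and
(b) `underbar-S_* ⊆ S_* ⊆ S̄_* ⊆ S_s` where
`underbar-S_* = {x : h̄_*(x) ≥ (1/2)·T_s·l_φ·l_s}`. -/
theorem multi_backup_set_inclusions
    (n ν : ℕ) (hn : 0 < n) (hν : 0 < ν)
    (hs : EuclideanSpace ℝ (Fin n) → ℝ)
    (Ss : Set (EuclideanSpace ℝ (Fin n)))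
    (hSs : Ss = {x | 0 ≤ hs x})
    (φ : Fin ν → EuclideanSpace ℝ (Fin n) → ℝ → EuclideanSpace ℝ (Fin n))
    (hφ0 : ∀ j x, φ j x 0 = x)
    (hφadd : ∀ (j : Fin ν) (x : EuclideanSpace ℝ (Fin n)) (s t : ℝ), 0 ≤ s → 0 ≤ t →
      φ j x (s + t) = φ j (φ j x s) t)
    (hb : Fin ν → EuclideanSpace ℝ (Fin n) → ℝ)
    (Sb : Fin ν → Set (EuclideanSpace ℝ (Fin n)))
    (hSb : ∀ j, Sb j = {x | 0 ≤ hb j x})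
    (hsub : ∀ j, Sb j ⊆ Ss)
    (hinv : ∀ j, ∀ x ∈ Sb j, ∀ t : ℝ, 0 ≤ t → φ j x t ∈ Sb j)
    (T : ℝ) (hT : 0 < T)
    (Sstarj : Fin ν → Set (EuclideanSpace ℝ (Fin n)))
    (hSstarj : ∀ j, Sstarj j =
      {x | 0 ≤ hb j (φ j x T) ∧ ∀ τ ∈ Icc (0:ℝ) T, 0 ≤ hs (φ j x τ)})
    (Sstar : Set (EuclideanSpace ℝ (Fin n)))
    (hSstar : Sstar = {x | ∃ j : Fin ν, x ∈ Sstarj j})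
    (N : ℕ) (hN : 0 < N) (Ts : ℝ) (hTs : Ts = T / N)
    (hbarStarj : Fin ν → EuclideanSpace ℝ (Fin n) → ℝ)
    (hhbarStarj : ∀ j x, hbarStarj j x =
      min (hb j (φ j x ((N : ℝ) * Ts)))
        ((Finset.range (N + 1)).inf' Finset.nonempty_range_add_one
          (fun i => hs (φ j x ((i : ℝ) * Ts)))))
    (hbarStar : EuclideanSpace ℝ (Fin n) → ℝ)
    (hhbarStar : ∀ x, hbarStar x =
      Finset.univ.sup' ⟨⟨0, hν⟩, Finset.mem_univ _⟩ (fun j => hbarStarj j x))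
    (SbarStarj : Fin ν → Set (EuclideanSpace ℝ (Fin n)))
    (hSbarStarj : ∀ j, SbarStarj j = {x | 0 ≤ hbarStarj j x})
    (SbarStar : Set (EuclideanSpace ℝ (Fin n)))
    (hSbarStar : SbarStar = {x | 0 ≤ hbarStar x})
    (ls lφ : ℝ) (hls : 0 < ls) (hlφ : 0 < lφ)
    (hlip_s : ∀ x y : EuclideanSpace ℝ (Fin n), |hs x - hs y| ≤ ls * ‖x - y‖)
    (hlip_φ : ∀ j, ∀ x : EuclideanSpace ℝ (Fin n), ∀ τ₁ ∈ Icc (0:ℝ) T, ∀ τ₂ ∈ Icc (0:ℝ) T,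
      ‖φ j x τ₁ - φ j x τ₂‖ ≤ lφ * |τ₁ - τ₂|)
    (ubarSstarj : Fin ν → Set (EuclideanSpace ℝ (Fin n)))
    (hubarSstarj : ∀ j, ubarSstarj j = {x | (1 / 2) * Ts * lφ * ls ≤ hbarStarj j x})
    (ubarSstar : Set (EuclideanSpace ℝ (Fin n)))
    (hubarSstar : ubarSstar = {x | (1 / 2) * Ts * lφ * ls ≤ hbarStar x}) :
    (∀ j : Fin ν, ubarSstarj j ⊆ Sstarj j ∧ Sstarj j ⊆ SbarStarj j ∧ SbarStarj j ⊆ Ss) ∧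
    (ubarSstar ⊆ Sstar ∧ Sstar ⊆ SbarStar ∧ SbarStar ⊆ Ss) :=
  multi_backup_set_inclusions_general n ν hν hs Ss hSs φ hφ0 hb T hT Sstarj hSstarj Sstar hSstar N
    hN Ts hTs hbarStarj hhbarStarj hbarStar hhbarStar SbarStarj hSbarStarj SbarStar hSbarStar ls lφ
    hls hlφ hlip_s hlip_φ ubarSstarj hubarSstarj ubarSstar hubarSstar
end

section
/- With the definitions in the context, Γ ⊆ int S_ε (the interior of S_ε). More precisely: for every x ∈ ℝ^n, h(x) < h̄_*(x); hence if h(x) ≥ ε then h̄_*(x) > ε, and since h̄_* is continuous the set {x : h̄_*(x) > ε} is open and contained in S_ε, so Γ ⊆ {x : h(x) ≥ ε} ⊆ {x : h̄_*(x) > ε} ⊆ int S_ε. -/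
open Set

/-!
Each soft minimum lies strictly below the hard minimum of its arguments: with `m` the hard
minimum, `exp (-ρ₁ m)` is one of at least two positive summands inside the logarithm. The
soft maximum with the `log ν / ρ₂` offset lies below the hard maximum, since the sum of `ν`
exponentials is at most `ν` times the largest. Hence `h < h̄_*` everywhere, so
`{h ≥ ε} ⊆ {h̄_* > ε}`, an open subset of `S_ε` by continuity of `h̄_*`.
-/

namespace Real

lemma neg_one_div_mul_log_lt_of_exp_neg_mul_lt {ρ m S : ℝ} (hρ : 0 < ρ)
    (hS : exp (-(ρ * m)) < S) : -(1 / ρ) * log S < m := by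
  have hlog : -(ρ * m) < log S := (lt_log_iff_exp_lt ((exp_pos _).trans hS)).2 hS
  rw [show -(1 / ρ) * log S = -log S / ρ by ring, div_lt_iff₀ hρ]
  linarith

lemma exp_neg_mul_inf'_le_sum {ι : Type*} {s : Finset ι} (H : s.Nonempty) (f : ι → ℝ)
    (ρ : ℝ) : exp (-(ρ * s.inf' H f)) ≤ ∑ i ∈ s, exp (-(ρ * f i)) := by
  obtain ⟨i, hi, hinf⟩ := Finset.exists_mem_eq_inf' H f
  rw [hinf]
  exact Finset.single_le_sum (f := fun i => exp (-(ρ * f i))) (fun _ _ => (exp_pos _).le) hi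

lemma softmin_lt_min {ι : Type*} {s : Finset ι} (H : s.Nonempty) (f : ι → ℝ) (b : ℝ)
    {ρ : ℝ} (hρ : 0 < ρ) :
    -(1 / ρ) * log (∑ i ∈ s, exp (-(ρ * f i)) + exp (-(ρ * b))) < min b (s.inf' H f) := by
  apply neg_one_div_mul_log_lt_of_exp_neg_mul_lt hρ
  have hsum_pos : 0 < ∑ i ∈ s, exp (-(ρ * f i)) := Finset.sum_pos (fun _ _ => exp_pos _) H
  rcases min_cases b (s.inf' H f) with ⟨hmin, -⟩ | ⟨hmin, -⟩
  · rw [hmin]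
    linarith
  · rw [hmin]
    linarith [exp_neg_mul_inf'_le_sum H f ρ, exp_pos (-(ρ * b))]

lemma softmax_le_sup' {ι : Type*} [Fintype ι] [Nonempty ι] (g : ι → ℝ) {ρ : ℝ} (hρ : 0 < ρ) :
    (1 / ρ) * log (∑ j, exp (ρ * g j)) - log (Fintype.card ι) / ρ ≤
      Finset.univ.sup' Finset.univ_nonempty g := by
  set M := Finset.univ.sup' Finset.univ_nonempty g
  have hcard : (0 : ℝ) < Fintype.card ι := by exact_mod_cast Fintype.card_pos
  have hsum : ∑ j, exp (ρ * g j) ≤ Fintype.card ι * exp (ρ * M) := by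
    calc ∑ j, exp (ρ * g j) ≤ ∑ _j : ι, exp (ρ * M) :=
          Finset.sum_le_sum fun j _ => exp_le_exp.2 <|
            mul_le_mul_of_nonneg_left (Finset.le_sup' g (Finset.mem_univ j)) hρ.le
      _ = Fintype.card ι * exp (ρ * M) := by simp
  have hlog : log (∑ j, exp (ρ * g j)) ≤ log (Fintype.card ι) + ρ * M := by
    calc log (∑ j, exp (ρ * g j)) ≤ log (Fintype.card ι * exp (ρ * M)) :=
          log_le_log (Finset.sum_pos (fun _ _ => exp_pos _) Finset.univ_nonempty) hsum
      _ = log (Fintype.card ι) + ρ * M := by rw [log_mul hcard.ne' (exp_pos _).ne', log_exp]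
  calc (1 / ρ) * log (∑ j, exp (ρ * g j)) - log (Fintype.card ι) / ρ
      ≤ (1 / ρ) * (log (Fintype.card ι) + ρ * M) - log (Fintype.card ι) / ρ := by
        gcongr
    _ = M := by field_simp; ring

end Real

lemma Finset.sup'_lt_sup'_of_lt {ι α : Type*} [LinearOrder α] {s : Finset ι} (H : s.Nonempty)
    {f g : ι → α} (hfg : ∀ i ∈ s, f i < g i) : s.sup' H f < s.sup' H g := by
  obtain ⟨i, hi, hsup⟩ := Finset.exists_mem_eq_sup' H f
  rw [hsup]
  exact (hfg i hi).trans_le (Finset.le_sup' g hi)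

theorem Gamma_subset_interior_S_eps_general
    (n ν N : ℕ) (hν : 0 < ν)
    (Ts ρ₁ ρ₂ ε : ℝ)
    (hρ₁ : 0 < ρ₁) (hρ₂ : 0 < ρ₂)
    (φ : Fin ν → EuclideanSpace ℝ (Fin n) → ℝ → EuclideanSpace ℝ (Fin n))
    (hs : EuclideanSpace ℝ (Fin n) → ℝ)
    (hb : Fin ν → EuclideanSpace ℝ (Fin n) → ℝ)
    (hbarStarj : Fin ν → EuclideanSpace ℝ (Fin n) → ℝ)
    (hhbarStarj : ∀ j x, hbarStarj j x =
      min (hb j (φ j x ((N : ℝ) * Ts)))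
        ((Finset.range (N + 1)).inf' Finset.nonempty_range_add_one
          (fun i => hs (φ j x ((i : ℝ) * Ts)))))
    (hbarStar : EuclideanSpace ℝ (Fin n) → ℝ)
    (hhbarStar : ∀ x, hbarStar x =
      Finset.univ.sup' ⟨⟨0, hν⟩, Finset.mem_univ _⟩ (fun j => hbarStarj j x))
    (hbarStar_cont : Continuous hbarStar)
    (hj : Fin ν → EuclideanSpace ℝ (Fin n) → ℝ)
    (hhj : ∀ j x, hj j x =
      -(1 / ρ₁) * Real.log
        ((∑ i ∈ Finset.range (N + 1), Real.exp (-(ρ₁ * hs (φ j x ((i : ℝ) * Ts))))) +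
          Real.exp (-(ρ₁ * hb j (φ j x ((N : ℝ) * Ts))))))
    (h : EuclideanSpace ℝ (Fin n) → ℝ)
    (hh : ∀ x, h x =
      (1 / ρ₂) * Real.log (∑ j : Fin ν, Real.exp (ρ₂ * hj j x)) - Real.log ν / ρ₂)
    (Sε : Set (EuclideanSpace ℝ (Fin n)))
    (hSε : Sε = {x | ε ≤ hbarStar x})
    (Γ : Set (EuclideanSpace ℝ (Fin n)))
    (hΓ : Γ ⊆ {x | ε ≤ h x}) :
    (∀ x, h x < hbarStar x) ∧
    Γ ⊆ {x | ε < hbarStar x} ∧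
    IsOpen {x : EuclideanSpace ℝ (Fin n) | ε < hbarStar x} ∧
    {x : EuclideanSpace ℝ (Fin n) | ε < hbarStar x} ⊆ Sε ∧
    Γ ⊆ interior Sε := by
  have : Nonempty (Fin ν) := ⟨⟨0, hν⟩⟩
  have h_lt : ∀ x, h x < hbarStar x := fun x =>
    calc h x ≤ Finset.univ.sup' Finset.univ_nonempty (fun j => hj j x) := by
          simpa [hh x] using Real.softmax_le_sup' (fun j => hj j x) hρ₂
      _ < Finset.univ.sup' Finset.univ_nonempty (fun j => hbarStarj j x) :=
          Finset.sup'_lt_sup'_of_lt _ fun j _ => by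
            rw [hhj, hhbarStarj]
            exact Real.softmin_lt_min _ _ _ hρ₁
      _ = hbarStar x := (hhbarStar x).symm
  have hΓ_lt : Γ ⊆ {x | ε < hbarStar x} := fun x hx => (hΓ hx).trans_lt (h_lt x)
  have h_open : IsOpen {x : EuclideanSpace ℝ (Fin n) | ε < hbarStar x} :=
    isOpen_lt continuous_const hbarStar_cont
  have h_sub : {x : EuclideanSpace ℝ (Fin n) | ε < hbarStar x} ⊆ Sε := by
    rw [hSε]
    exact fun x hx => le_of_lt (show ε < hbarStar x from hx)
  exact ⟨h_lt, hΓ_lt, h_open, h_sub, hΓ_lt.trans (interior_maximal h_sub h_open)⟩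

/-- With `T_s = T/N`, semiflows `φ_j` (`φ_j(x,0) = x`), sampled barrier
functions `h̄_{*_j}(x) = min{h_{b_j}(φ_j(x,N·T_s)), min_{i∈{0,…,N}} h_s(φ_j(x,i·T_s))}`,
continuous `h̄_*(x) = max_j h̄_{*_j}(x)`, soft-minimum barrier functions
`h_j(x) = softmin_{ρ₁}(h_s(φ_j(x,0)), …, h_s(φ_j(x,N·T_s)), h_{b_j}(φ_j(x,N·T_s)))`,
soft-maximum combination `h(x) = softmax_{ρ₂}(h_1(x),…,h_ν(x))`,
`S_ε = {x : h̄_*(x) ≥ ε}` and `Γ ⊆ {x : h(x) ≥ ε}`: for every `x`, `h(x) < h̄_*(x)`;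
hence `Γ ⊆ {x : h̄_*(x) > ε}`, which is open and contained in `S_ε`, so
`Γ ⊆ int S_ε`. -/
theorem Gamma_subset_interior_S_eps
    (n ν N : ℕ) (hn : 0 < n) (hν : 0 < ν) (hN : 0 < N)
    (T Ts ρ₁ ρ₂ ε : ℝ) (hT : 0 < T) (hTs : Ts = T / N)
    (hρ₁ : 0 < ρ₁) (hρ₂ : 0 < ρ₂) (hε : 0 ≤ ε)
    (φ : Fin ν → EuclideanSpace ℝ (Fin n) → ℝ → EuclideanSpace ℝ (Fin n))
    (hφ0 : ∀ j x, φ j x 0 = x)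
    (hs : EuclideanSpace ℝ (Fin n) → ℝ)
    (hb : Fin ν → EuclideanSpace ℝ (Fin n) → ℝ)
    (hbarStarj : Fin ν → EuclideanSpace ℝ (Fin n) → ℝ)
    (hhbarStarj : ∀ j x, hbarStarj j x =
      min (hb j (φ j x ((N : ℝ) * Ts)))
        ((Finset.range (N + 1)).inf' Finset.nonempty_range_add_one
          (fun i => hs (φ j x ((i : ℝ) * Ts)))))
    (hbarStar : EuclideanSpace ℝ (Fin n) → ℝ)
    (hhbarStar : ∀ x, hbarStar x =
      Finset.univ.sup' ⟨⟨0, hν⟩, Finset.mem_univ _⟩ (fun j => hbarStarj j x))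
    (hbarStar_cont : Continuous hbarStar)
    (hj : Fin ν → EuclideanSpace ℝ (Fin n) → ℝ)
    (hhj : ∀ j x, hj j x =
      -(1 / ρ₁) * Real.log
        ((∑ i ∈ Finset.range (N + 1), Real.exp (-(ρ₁ * hs (φ j x ((i : ℝ) * Ts))))) +
          Real.exp (-(ρ₁ * hb j (φ j x ((N : ℝ) * Ts))))))
    (h : EuclideanSpace ℝ (Fin n) → ℝ)
    (hh : ∀ x, h x =
      (1 / ρ₂) * Real.log (∑ j : Fin ν, Real.exp (ρ₂ * hj j x)) - Real.log ν / ρ₂)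
    (Sε : Set (EuclideanSpace ℝ (Fin n)))
    (hSε : Sε = {x | ε ≤ hbarStar x})
    (Γ : Set (EuclideanSpace ℝ (Fin n)))
    (hΓ : Γ ⊆ {x | ε ≤ h x}) :
    (∀ x, h x < hbarStar x) ∧
    Γ ⊆ {x | ε < hbarStar x} ∧
    IsOpen {x : EuclideanSpace ℝ (Fin n) | ε < hbarStar x} ∧
    {x : EuclideanSpace ℝ (Fin n) | ε < hbarStar x} ⊆ Sε ∧
    Γ ⊆ interior Sε :=
  Gamma_subset_interior_S_eps_general n ν N hν Ts ρ₁ ρ₂ ε hρ₁ hρ₂ φ hs hb hbarStarj hhbarStarj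
    hbarStar hhbarStar hbarStar_cont hj hhj h hh Sε hSε Γ hΓ
end
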